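/- arXiv:2601.11717 — 5 statements merged into one kernel-verified Lean document; each statement's English description precedes it below -/
import Mathlib

section
/- Let r : [0,∞) → ℝ be a continuously differentiable function and suppose there are constants r_max ≥ 1 and L ≥ 1 such that 0 ≤ r(t) ≤ r_max and |r′(t)| ≤ L·r(t) for all t ≥ 0. Define f(t) := r(t)·exp(−∫₀ᵗ r(s) ds). Then for every ε ≥ 0, |∫₀^ε f(t) dt − ε·r(0)| ≤ L·r_max²·ε². -/
/-- For a continuously differentiable rate function `r` on `[0,∞)` with
`0 ≤ r ≤ r_max`, `|r'| ≤ L * r`, `r_max, L ≥ 1`, and `f t = r t * exp (-∫₀ᵗ r)`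
the density of the first event time, one has
`|∫₀^ε f - ε * r 0| ≤ L * r_max ^ 2 * ε ^ 2` for every `ε ≥ 0`. -/
theorem stmt_2 (r : ℝ → ℝ) (hr : ContDiffOn ℝ 1 r (Set.Ici 0))
    (r_max L : ℝ) (hr_max : 1 ≤ r_max) (hL : 1 ≤ L)
    (hr_nonneg : ∀ t : ℝ, 0 ≤ t → 0 ≤ r t)
    (hr_ub : ∀ t : ℝ, 0 ≤ t → r t ≤ r_max)
    (hr' : ∀ t : ℝ, 0 ≤ t → |derivWithin r (Set.Ici 0) t| ≤ L * r t) :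
    ∀ ε : ℝ, 0 ≤ ε →
      |(∫ t in (0:ℝ)..ε, r t * Real.exp (-∫ s in (0:ℝ)..t, r s)) - ε * r 0|
        ≤ L * r_max ^ 2 * ε ^ 2 := by
  intro ε hε
  have h1L : (0:ℝ) ≤ L := le_trans zero_le_one hL
  have h1M : (0:ℝ) ≤ r_max := le_trans zero_le_one hr_max
  have hrc : ContinuousOn r (Set.Ici 0) := hr.continuousOn
  have huIcc : Set.uIcc (0:ℝ) ε = Set.Icc 0 ε := Set.uIcc_of_le hε
  have hrcIcc : ContinuousOn r (Set.Icc 0 ε) :=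
    hrc.mono (fun x hx => hx.1)
  have hrc' : ∀ t : ℝ, 0 ≤ t → ContinuousOn r (Set.uIcc 0 t) := by
    intro t ht
    refine hrc.mono ?_
    rw [Set.uIcc_of_le ht]
    exact fun x hx => hx.1
  have hrint : ∀ t : ℝ, 0 ≤ t → IntervalIntegrable r MeasureTheory.volume 0 t := by
    intro t ht
    exact (hrc' t ht).intervalIntegrable
  set R : ℝ → ℝ := fun t => ∫ s in (0:ℝ)..t, r s with hRdef
  have hR_nonneg : ∀ t : ℝ, 0 ≤ t → 0 ≤ R t := by
    intro t ht
    exact intervalIntegral.integral_nonneg ht (fun x hx => hr_nonneg x hx.1)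
  have hR_le : ∀ t : ℝ, 0 ≤ t → R t ≤ r_max * t := by
    intro t ht
    calc R t ≤ ∫ _ in (0:ℝ)..t, r_max := by
          refine intervalIntegral.integral_mono_on ht (hrint t ht)
            intervalIntegrable_const (fun x hx => hr_ub x hx.1)
      _ = r_max * t := by simp [mul_comm]
  -- continuity of R on Icc 0 ε
  have hRint : MeasureTheory.IntegrableOn r (Set.uIcc 0 ε) := by
    rw [huIcc]; exact hrcIcc.integrableOn_Icc
  have hRc : ContinuousOn R (Set.Icc 0 ε) := by
    have h := intervalIntegral.continuousOn_primitive_interval hRint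
    rwa [huIcc] at h
  -- continuity of f on Icc 0 ε
  have hfc : ContinuousOn (fun t => r t * Real.exp (-R t)) (Set.Icc 0 ε) :=
    hrcIcc.mul ((Real.continuous_exp.comp_continuousOn hRc.neg))
  have hfint : IntervalIntegrable (fun t => r t * Real.exp (-R t))
      MeasureTheory.volume 0 ε := by
    apply ContinuousOn.intervalIntegrable
    rwa [huIcc]
  -- MVT bound on r
  have hdiff : DifferentiableOn ℝ r (Set.Ici 0) := hr.differentiableOn one_ne_zero
  have hlip : ∀ t : ℝ, 0 ≤ t → |r t - r 0| ≤ L * r_max * t := by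
    intro t ht
    have hb : ∀ x ∈ Set.Ici (0:ℝ), ‖derivWithin r (Set.Ici 0) x‖ ≤ L * r_max := by
      intro x hx
      calc ‖derivWithin r (Set.Ici 0) x‖ ≤ L * r x := hr' x hx
        _ ≤ L * r_max := by nlinarith [hr_ub x hx]
    have := (convex_Ici (0:ℝ)).norm_image_sub_le_of_norm_derivWithin_le hdiff hb
      Set.self_mem_Ici ht
    simpa [Real.norm_eq_abs, abs_of_nonneg ht] using this
  -- pointwise bound
  set C : ℝ := L * r_max ^ 2 with hC
  have hCpos : 0 ≤ C := by positivity
  have key : ∀ t ∈ Set.Icc (0:ℝ) ε, |r t * Real.exp (-R t) - r 0| ≤ 2 * C * t := by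
    intro t ht
    obtain ⟨ht0, _⟩ := ht
    have hexp_le : Real.exp (-R t) ≤ 1 := by
      rw [Real.exp_le_one_iff]
      linarith [hR_nonneg t ht0]
    have hexp_ge : 1 - R t ≤ Real.exp (-R t) := by
      have := Real.add_one_le_exp (-R t); linarith
    have h1 : |r t * Real.exp (-R t) - r t| ≤ r_max * (r_max * t) := by
      rw [abs_sub_comm]
      have : r t - r t * Real.exp (-R t) = r t * (1 - Real.exp (-R t)) := by ring
      rw [this, abs_of_nonneg]
      · have h2 : 1 - Real.exp (-R t) ≤ R t := by linarith
        have := hR_le t ht0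
        nlinarith [hr_nonneg t ht0, hr_ub t ht0, hR_nonneg t ht0]
      · nlinarith [hr_nonneg t ht0]
    have h2 := hlip t ht0
    have : |r t * Real.exp (-R t) - r 0| ≤
        |r t * Real.exp (-R t) - r t| + |r t - r 0| := by
      have := abs_sub_abs_le_abs_sub (r t * Real.exp (-R t)) (r t)
      exact abs_sub_le _ _ _
    have hfin : r_max * (r_max * t) + L * r_max * t ≤ 2 * C * t := by
      rw [hC]
      nlinarith [mul_nonneg (mul_nonneg (sub_nonneg.mpr hL) (sq_nonneg r_max)) ht0,
        mul_nonneg (mul_nonneg (mul_nonneg h1L h1M) (sub_nonneg.mpr hr_max)) ht0]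
    linarith
  -- assemble
  have hconst : ε * r 0 = ∫ _ in (0:ℝ)..ε, r 0 := by simp [mul_comm]
  rw [hconst, ← intervalIntegral.integral_sub hfint intervalIntegrable_const]
  have habs : |∫ t in (0:ℝ)..ε, (r t * Real.exp (-R t) - r 0)|
      ≤ ∫ t in (0:ℝ)..ε, |r t * Real.exp (-R t) - r 0| :=
    intervalIntegral.abs_integral_le_integral_abs hε
  have hmono : (∫ t in (0:ℝ)..ε, |r t * Real.exp (-R t) - r 0|)
      ≤ ∫ t in (0:ℝ)..ε, 2 * C * t := by
    refine intervalIntegral.integral_mono_on hε ?_ ?_ key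
    · apply ContinuousOn.intervalIntegrable
      rw [huIcc]
      exact (hfc.sub continuousOn_const).abs
    · apply Continuous.intervalIntegrable
      continuity
  have hcalc : (∫ t in (0:ℝ)..ε, 2 * C * t) = C * ε ^ 2 := by
    rw [intervalIntegral.integral_const_mul, integral_id]
    ring
  calc |∫ t in (0:ℝ)..ε, (r t * Real.exp (-R t) - r 0)|
      ≤ ∫ t in (0:ℝ)..ε, 2 * C * t := le_trans habs hmono
    _ = C * ε ^ 2 := hcalc
    _ = L * r_max ^ 2 * ε ^ 2 := by rw [hC]
end

section
/- Let w_min ∈ (0,1], w_sep > 0, and let w_ii, w_ij, w_ji ≥ 0 satisfy w_ij ≥ w_min and w_ii − w_ij ≥ w_sep. Then for all real x ≥ 0 and y ≥ 0, |w_ji·x − w_ij·y| + |w_ij·((w_ij + w_ii)·y − 2·w_ji·x)| ≥ w_min·(w_ii − w_ij)·y / 2 ≥ w_min·w_sep·y / 2. -/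
/-- The deterministic identifiability inequality: if `w_min ∈ (0,1]`,
`w_sep > 0`, `w_ii, w_ij, w_ji ≥ 0` with `w_ij ≥ w_min` and `w_ii - w_ij ≥ w_sep`,
then for all `x, y ≥ 0`,
`|w_ji x - w_ij y| + |w_ij ((w_ij + w_ii) y - 2 w_ji x)| ≥ w_min (w_ii - w_ij) y / 2
  ≥ w_min w_sep y / 2`. -/
theorem stmt_6 (w_min w_sep w_ii w_ij w_ji : ℝ)
    (hmin_pos : 0 < w_min) (hmin_le : w_min ≤ 1) (hsep : 0 < w_sep)
    (hii : 0 ≤ w_ii) (hij : 0 ≤ w_ij) (hji : 0 ≤ w_ji)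
    (hij_min : w_min ≤ w_ij) (hsep_le : w_sep ≤ w_ii - w_ij)
    (x y : ℝ) (hx : 0 ≤ x) (hy : 0 ≤ y) :
    w_min * (w_ii - w_ij) * y / 2
      ≤ |w_ji * x - w_ij * y| + |w_ij * ((w_ij + w_ii) * y - 2 * w_ji * x)| ∧
    w_min * w_sep * y / 2 ≤ w_min * (w_ii - w_ij) * y / 2 := by
  constructor
  · set A := w_ji * x - w_ij * y with hA
    set B := (w_ij + w_ii) * y - 2 * w_ji * x with hBdef
    have habs : |w_ij * B| = w_ij * |B| := by
      rw [abs_mul, abs_of_nonneg hij]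
    have key : (w_ii - w_ij) * y ≤ 2 * |A| + |B| := by
      have h1 : (w_ii - w_ij) * y = 2 * A + B := by rw [hA, hBdef]; ring
      calc (w_ii - w_ij) * y ≤ |2 * A + B| := by rw [← h1]; exact le_abs_self _
        _ ≤ |2 * A| + |B| := abs_add_le _ _
        _ = 2 * |A| + |B| := by rw [abs_mul]; norm_num
    rw [habs]
    nlinarith [abs_nonneg A, abs_nonneg B, mul_nonneg hmin_pos.le (abs_nonneg B),
      mul_nonneg (sub_nonneg.mpr hmin_le) (abs_nonneg A),
      mul_nonneg (sub_nonneg.mpr hij_min) (abs_nonneg B)]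
  · have : 0 ≤ w_min * y := mul_nonneg hmin_pos.le hy
    nlinarith
end

section
/- Let L ≥ 1, μ_max ≥ 1, ε ∈ [0,1] and t ≥ 0. Let n ≥ 1, and for j = 1,…,n let w_j ≥ 0, let N_j : [0,∞) → ℝ be nondecreasing right-continuous functions with N_j(0) = 0, and let φ_j be delay kernels with smoothness constant L. Let μ : [0,∞) → ℝ be differentiable with 0 ≤ μ(u) ≤ μ_max and |μ′(u)| ≤ L·μ(u) for all u ≥ 0. Define λ(u) := μ(u) + ∑_{j=1}^n w_j·∫_{(0,u]} φ_j(u,x) dN_j(x). Then |λ(t+ε) − λ(t) − ∑_{j=1}^n w_j·(N_j(t+ε) − N_j(t))| ≤ (μ_max + λ(t) + ∑_{j=1}^n w_j·(N_j(t+ε) − N_j(t)))·L·ε. -/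
/-- A delay kernel with smoothness constant `L`: `φ t x` is defined for `0 ≤ x ≤ t`,
`φ x x = 1`, `t ↦ φ t x` is nonnegative, nonincreasing and differentiable on `[x, ∞)`
(differentiability within `Set.Ici x`), `|∂φ/∂t (t,x)| ≤ L * φ t x`, and `x ↦ φ t x`
is measurable (so that integrals against point-process measures make sense). -/
structure IsDelayKernel (L : ℝ) (φ : ℝ → ℝ → ℝ) : Prop where
  one_at : ∀ x : ℝ, 0 ≤ x → φ x x = 1
  nonneg : ∀ x t : ℝ, 0 ≤ x → x ≤ t → 0 ≤ φ t x
  antitone : ∀ x t s : ℝ, 0 ≤ x → x ≤ t → t ≤ s → φ s x ≤ φ t x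
  diff : ∀ x t : ℝ, 0 ≤ x → x ≤ t →
    DifferentiableWithinAt ℝ (fun u => φ u x) (Set.Ici x) t
  deriv_bound : ∀ x t : ℝ, 0 ≤ x → x ≤ t →
    |derivWithin (fun u => φ u x) (Set.Ici x) t| ≤ L * φ t x
  meas : ∀ t : ℝ, Measurable fun x => φ t x


open MeasureTheory Set

lemma mvt_bound {f : ℝ → ℝ} {s : Set ℝ} {a b C : ℝ}
    (hs : s.OrdConnected) (hab : a ≤ b) (ha : a ∈ s) (hb : b ∈ s)
    (hdiff : ∀ y ∈ Set.Icc a b, DifferentiableWithinAt ℝ f s y)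
    (hbound : ∀ y ∈ Set.Icc a b, |derivWithin f s y| ≤ C) :
    |f b - f a| ≤ C * (b - a) := by
  have hsub : Set.Icc a b ⊆ s := hs.out ha hb
  have := (convex_Icc a b).norm_image_sub_le_of_norm_hasDerivWithin_le
    (f' := fun y => derivWithin f s y)
    (fun y hy => ((hdiff y hy).hasDerivWithinAt).mono hsub)
    (fun y hy => hbound y hy) (left_mem_Icc.2 hab) (right_mem_Icc.2 hab)
  simpa [Real.norm_eq_abs, abs_of_nonneg (sub_nonneg.2 hab)] using this

lemma kernel_diff_bound {L : ℝ} {φ : ℝ → ℝ → ℝ} (hφ : IsDelayKernel L φ) (hL : 0 ≤ L)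
    {x a b : ℝ} (hx : 0 ≤ x) (hxa : x ≤ a) (hab : a ≤ b) :
    |φ b x - φ a x| ≤ L * φ a x * (b - a) := by
  refine mvt_bound Set.ordConnected_Ici hab (le_trans hxa (le_refl a)) (hxa.trans hab)
    (fun y hy => hφ.diff x y hx (hxa.trans hy.1)) (fun y hy => ?_)
  have h1 := hφ.deriv_bound x y hx (hxa.trans hy.1)
  have h2 := hφ.antitone x a y hx hxa hy.1
  nlinarith [hφ.nonneg x y hx (hxa.trans hy.1)]

lemma stieltjes_integrableOn_of_bound (N : StieltjesFunction ℝ) {g : ℝ → ℝ} (hg : Measurable g)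
    {a b C : ℝ} (hC : ∀ x ∈ Set.Ioc a b, |g x| ≤ C) :
    MeasureTheory.IntegrableOn g (Set.Ioc a b) N.measure := by
  have hfin : N.measure (Set.Ioc a b) < ⊤ := by
    rw [N.measure_Ioc]; exact ENNReal.ofReal_lt_top
  haveI : MeasureTheory.IsFiniteMeasure (N.measure.restrict (Set.Ioc a b)) :=
    ⟨by rwa [Measure.restrict_apply_univ]⟩
  refine (MeasureTheory.integrable_const C).mono' hg.aestronglyMeasurable.restrict ?_
  filter_upwards [MeasureTheory.ae_restrict_mem measurableSet_Ioc] with x hx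
  simpa [Real.norm_eq_abs] using hC x hx

lemma per_j (L ε t : ℝ) (hL : 1 ≤ L) (hε0 : 0 ≤ ε) (ht : 0 ≤ t)
    (N : StieltjesFunction ℝ) (φ : ℝ → ℝ → ℝ) (hφ : IsDelayKernel L φ) :
    |(∫ x in Set.Ioc 0 (t+ε), φ (t+ε) x ∂N.measure)
      - (∫ x in Set.Ioc 0 t, φ t x ∂N.measure) - (N (t+ε) - N t)|
    ≤ L * ε * (∫ x in Set.Ioc 0 t, φ t x ∂N.measure) + L * ε * (N (t+ε) - N t) := by
  have hL0 : (0:ℝ) ≤ L := zero_le_one.trans hL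
  have hts : t ≤ t + ε := le_add_of_nonneg_right hε0
  haveI : MeasureTheory.IsFiniteMeasure (N.measure.restrict (Set.Ioc t (t+ε))) :=
    ⟨by rw [MeasureTheory.Measure.restrict_apply_univ, N.measure_Ioc]
        exact ENNReal.ofReal_lt_top⟩
  -- pointwise bounds
  have hb1 : ∀ x ∈ Set.Ioc (0:ℝ) t, |φ (t+ε) x| ≤ 1 := by
    intro x hx
    have h0 : 0 ≤ x := hx.1.le
    have := hφ.antitone x x (t+ε) h0 le_rfl (hx.2.trans hts)
    rw [hφ.one_at x h0] at this
    rw [abs_of_nonneg (hφ.nonneg x (t+ε) h0 (hx.2.trans hts))]; exact this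
  have hb0 : ∀ x ∈ Set.Ioc (0:ℝ) t, |φ t x| ≤ 1 := by
    intro x hx
    have h0 : 0 ≤ x := hx.1.le
    have := hφ.antitone x x t h0 le_rfl hx.2
    rw [hφ.one_at x h0] at this
    rw [abs_of_nonneg (hφ.nonneg x t h0 hx.2)]; exact this
  have hb2 : ∀ x ∈ Set.Ioc t (t+ε), |φ (t+ε) x| ≤ 1 := by
    intro x hx
    have h0 : 0 ≤ x := ht.trans hx.1.le
    have := hφ.antitone x x (t+ε) h0 le_rfl hx.2
    rw [hφ.one_at x h0] at this
    rw [abs_of_nonneg (hφ.nonneg x (t+ε) h0 hx.2)]; exact this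
  have i1 : IntegrableOn (fun x => φ (t+ε) x) (Set.Ioc 0 t) N.measure :=
    stieltjes_integrableOn_of_bound N (hφ.meas (t+ε)) hb1
  have i0 : IntegrableOn (fun x => φ t x) (Set.Ioc 0 t) N.measure :=
    stieltjes_integrableOn_of_bound N (hφ.meas t) hb0
  have i2 : IntegrableOn (fun x => φ (t+ε) x) (Set.Ioc t (t+ε)) N.measure :=
    stieltjes_integrableOn_of_bound N (hφ.meas (t+ε)) hb2
  -- split integral
  have hsplit : (∫ x in Set.Ioc 0 (t+ε), φ (t+ε) x ∂N.measure)
      = (∫ x in Set.Ioc 0 t, φ (t+ε) x ∂N.measure)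
        + (∫ x in Set.Ioc t (t+ε), φ (t+ε) x ∂N.measure) := by
    rw [← Set.Ioc_union_Ioc_eq_Ioc ht hts,
      MeasureTheory.setIntegral_union (Set.Ioc_disjoint_Ioc_of_le le_rfl) measurableSet_Ioc i1 i2]
  -- measure of Ioc t (t+ε)
  have hmeas : (N.measure (Set.Ioc t (t+ε))).toReal = N (t+ε) - N t := by
    rw [N.measure_Ioc, ENNReal.toReal_ofReal (sub_nonneg.2 (N.mono hts))]
  -- term A
  have hA : |∫ x in Set.Ioc 0 t, (φ (t+ε) x - φ t x) ∂N.measure|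
      ≤ ∫ x in Set.Ioc 0 t, L * ε * φ t x ∂N.measure := by
    have hb' : ∀ᵐ x ∂(N.measure.restrict (Set.Ioc 0 t)),
        ‖φ (t+ε) x - φ t x‖ ≤ L * ε * φ t x := by
      filter_upwards [MeasureTheory.ae_restrict_mem measurableSet_Ioc] with x hx
      have h := kernel_diff_bound hφ hL0 hx.1.le hx.2 hts
      rw [Real.norm_eq_abs]
      calc |φ (t+ε) x - φ t x| ≤ L * φ t x * ((t+ε) - t) := h
      _ = L * ε * φ t x := by ring
    simpa [Real.norm_eq_abs] using
      MeasureTheory.norm_integral_le_of_norm_le (i0.const_mul (L * ε)) hb'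
  have hA' : (∫ x in Set.Ioc 0 t, L * ε * φ t x ∂N.measure)
      = L * ε * ∫ x in Set.Ioc 0 t, φ t x ∂N.measure := by
    rw [MeasureTheory.integral_const_mul]
  -- term B
  have hB : |∫ x in Set.Ioc t (t+ε), (φ (t+ε) x - 1) ∂N.measure|
      ≤ L * ε * (N (t+ε) - N t) := by
    have hb : ∀ᵐ x ∂(N.measure.restrict (Set.Ioc t (t+ε))), ‖φ (t+ε) x - 1‖ ≤ L * ε := by
      filter_upwards [MeasureTheory.ae_restrict_mem measurableSet_Ioc] with x hx
      have h0 : 0 ≤ x := ht.trans hx.1.le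
      have h := kernel_diff_bound hφ hL0 h0 le_rfl hx.2
      rw [hφ.one_at x h0] at h
      rw [Real.norm_eq_abs]
      calc |φ (t+ε) x - 1| ≤ L * 1 * ((t+ε) - x) := h
      _ ≤ L * ε := by nlinarith [hx.1]
    calc |∫ x in Set.Ioc t (t+ε), (φ (t+ε) x - 1) ∂N.measure|
        ≤ ∫ _x in Set.Ioc t (t+ε), (L * ε) ∂N.measure := by
          simpa [Real.norm_eq_abs] using
            MeasureTheory.norm_integral_le_of_norm_le
              (f := fun x => φ (t+ε) x - 1) (integrable_const (L * ε)) hb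
      _ = (N.measure (Set.Ioc t (t+ε))).toReal * (L * ε) := by
          rw [MeasureTheory.setIntegral_const, measureReal_def]; simp [smul_eq_mul]
      _ = L * ε * (N (t+ε) - N t) := by rw [hmeas]; ring
  -- assemble
  have hi21 : IntegrableOn (fun x : ℝ => (1:ℝ)) (Set.Ioc t (t+ε)) N.measure := integrable_const _
  have key : (∫ x in Set.Ioc 0 (t+ε), φ (t+ε) x ∂N.measure)
      - (∫ x in Set.Ioc 0 t, φ t x ∂N.measure) - (N (t+ε) - N t)
      = (∫ x in Set.Ioc 0 t, (φ (t+ε) x - φ t x) ∂N.measure)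
        + (∫ x in Set.Ioc t (t+ε), (φ (t+ε) x - 1) ∂N.measure) := by
    rw [MeasureTheory.integral_sub i1 i0, MeasureTheory.integral_sub i2 hi21, hsplit]
    have : (∫ _x in Set.Ioc t (t+ε), (1:ℝ) ∂N.measure) = N (t+ε) - N t := by
      rw [MeasureTheory.setIntegral_const, measureReal_def, hmeas]; simp
    rw [this]; ring
  rw [key]
  calc |(∫ x in Set.Ioc 0 t, (φ (t+ε) x - φ t x) ∂N.measure)
        + (∫ x in Set.Ioc t (t+ε), (φ (t+ε) x - 1) ∂N.measure)|
      ≤ |∫ x in Set.Ioc 0 t, (φ (t+ε) x - φ t x) ∂N.measure|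
        + |∫ x in Set.Ioc t (t+ε), (φ (t+ε) x - 1) ∂N.measure| := abs_add_le _ _
    _ ≤ L * ε * (∫ x in Set.Ioc 0 t, φ t x ∂N.measure) + L * ε * (N (t+ε) - N t) := by
        refine add_le_add ?_ hB
        calc |∫ x in Set.Ioc 0 t, (φ (t+ε) x - φ t x) ∂N.measure|
            ≤ ∫ x in Set.Ioc 0 t, L * ε * φ t x ∂N.measure := hA
          _ = _ := hA'

/-- first-order perturbation bound for the conditional intensity
`λ(u) = μ(u) + ∑_j w_j ∫_{(0,u]} φ_j(u,x) dN_j(x)` of a node in a non-stationary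
multivariate Hawkes process:
`|λ(t+ε) - λ(t) - ∑_j w_j (N_j(t+ε) - N_j(t))|
  ≤ (μ_max + λ(t) + ∑_j w_j (N_j(t+ε) - N_j(t))) L ε`. -/
theorem stmt_12 (L μ_max ε t : ℝ) (hL : 1 ≤ L) (hμ_max : 1 ≤ μ_max)
    (hε0 : 0 ≤ ε) (hε1 : ε ≤ 1) (ht : 0 ≤ t)
    (n : ℕ) (hn : 1 ≤ n)
    (w : Fin n → ℝ) (hw : ∀ j, 0 ≤ w j)
    (N : Fin n → StieltjesFunction ℝ) (hN0 : ∀ j, N j 0 = 0)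
    (φ : Fin n → ℝ → ℝ → ℝ) (hφ : ∀ j, IsDelayKernel L (φ j))
    (μ : ℝ → ℝ)
    (hμ_diff : ∀ u : ℝ, 0 ≤ u → DifferentiableWithinAt ℝ μ (Set.Ici 0) u)
    (hμ_nonneg : ∀ u : ℝ, 0 ≤ u → 0 ≤ μ u)
    (hμ_ub : ∀ u : ℝ, 0 ≤ u → μ u ≤ μ_max)
    (hμ' : ∀ u : ℝ, 0 ≤ u → |derivWithin μ (Set.Ici 0) u| ≤ L * μ u)
    (lam : ℝ → ℝ)
    (hlam : ∀ u : ℝ,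
      lam u = μ u + ∑ j, w j * ∫ x in Set.Ioc 0 u, φ j u x ∂(N j).measure) :
    |lam (t + ε) - lam t - ∑ j, w j * (N j (t + ε) - N j t)|
      ≤ (μ_max + lam t + ∑ j, w j * (N j (t + ε) - N j t)) * L * ε := by
  have hL0 : (0:ℝ) ≤ L := zero_le_one.trans hL
  have hts : t ≤ t + ε := le_add_of_nonneg_right hε0
  have htε : 0 ≤ t + ε := ht.trans hts
  have hμb : |μ (t + ε) - μ t| ≤ L * μ_max * ε := by
    have hm := mvt_bound (f := μ) (s := Set.Ici 0) (C := L * μ_max)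
      Set.ordConnected_Ici hts ht htε
      (fun y hy => hμ_diff y (ht.trans hy.1))
      (fun y hy => (hμ' y (ht.trans hy.1)).trans
        (mul_le_mul_of_nonneg_left (hμ_ub y (ht.trans hy.1)) hL0))
    calc |μ (t + ε) - μ t| ≤ L * μ_max * ((t + ε) - t) := hm
    _ = L * μ_max * ε := by ring
  have hper : ∀ j, |(∫ x in Set.Ioc 0 (t + ε), φ j (t + ε) x ∂(N j).measure)
        - (∫ x in Set.Ioc 0 t, φ j t x ∂(N j).measure) - (N j (t + ε) - N j t)|
      ≤ L * ε * (∫ x in Set.Ioc 0 t, φ j t x ∂(N j).measure)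
        + L * ε * (N j (t + ε) - N j t) :=
    fun j => per_j L ε t hL hε0 ht (N j) (φ j) (hφ j)
  have hkey : lam (t + ε) - lam t - ∑ j, w j * (N j (t + ε) - N j t)
      = (μ (t + ε) - μ t) + ∑ j, w j *
        ((∫ x in Set.Ioc 0 (t + ε), φ j (t + ε) x ∂(N j).measure)
          - (∫ x in Set.Ioc 0 t, φ j t x ∂(N j).measure) - (N j (t + ε) - N j t)) := by
    rw [hlam, hlam]
    simp only [mul_sub]
    simp only [Finset.sum_sub_distrib]
    ring
  have habs : |lam (t + ε) - lam t - ∑ j, w j * (N j (t + ε) - N j t)|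
      ≤ L * μ_max * ε + ∑ j, w j *
        (L * ε * (∫ x in Set.Ioc 0 t, φ j t x ∂(N j).measure)
          + L * ε * (N j (t + ε) - N j t)) := by
    rw [hkey]
    refine (abs_add_le _ _).trans (add_le_add hμb ?_)
    refine (Finset.abs_sum_le_sum_abs _ _).trans (Finset.sum_le_sum fun j _ => ?_)
    rw [abs_mul, abs_of_nonneg (hw j)]
    exact mul_le_mul_of_nonneg_left (hper j) (hw j)
  have hsum : ∑ j, w j *
        (L * ε * (∫ x in Set.Ioc 0 t, φ j t x ∂(N j).measure)
          + L * ε * (N j (t + ε) - N j t))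
      = L * ε * (∑ j, w j * (∫ x in Set.Ioc 0 t, φ j t x ∂(N j).measure))
        + L * ε * (∑ j, w j * (N j (t + ε) - N j t)) := by
    rw [Finset.mul_sum, Finset.mul_sum, ← Finset.sum_add_distrib]
    exact Finset.sum_congr rfl fun j _ => by ring
  rw [hsum] at habs
  have hlamt : lam t = μ t + ∑ j, w j * (∫ x in Set.Ioc 0 t, φ j t x ∂(N j).measure) := hlam t
  have hμt : 0 ≤ μ t := hμ_nonneg t ht
  refine habs.trans ?_
  rw [hlamt]
  nlinarith [mul_nonneg (mul_nonneg hL0 hε0) hμt]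
end

section
/- Let L ≥ 1, μ_max ≥ 0 and 0 ≤ t ≤ s. Let n ≥ 1, and for j = 1,…,n let w_j ≥ 0, let N_j : [0,∞) → ℝ be nondecreasing right-continuous functions with N_j(0) = 0, and let φ_j be delay kernels with smoothness constant L. Let μ : [0,∞) → ℝ satisfy 0 ≤ μ(u) ≤ μ_max for all u ≥ 0. Define λ(u) := μ(u) + ∑_{j=1}^n w_j·∫_{(0,u]} φ_j(u,x) dN_j(x). Then λ(s) − λ(t) ≤ μ_max + ∑_{j=1}^n w_j·(N_j(s) − N_j(t)). -/
lemma kernel_int_aux (L t s : ℝ) (ht : 0 ≤ t) (hts : t ≤ s)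
    (ν : StieltjesFunction ℝ) (φ : ℝ → ℝ → ℝ) (hφ : IsDelayKernel L φ) :
    (∫ x in Set.Ioc 0 s, φ s x ∂ν.measure)
      - ∫ x in Set.Ioc 0 t, φ t x ∂ν.measure ≤ ν s - ν t := by
  have hint : ∀ u a b : ℝ, 0 ≤ a → b ≤ u →
      MeasureTheory.IntegrableOn (fun x => φ u x) (Set.Ioc a b) ν.measure := by
    intro u a b ha hb
    apply MeasureTheory.Measure.integrableOn_of_bounded
      (M := 1) (measure_Ioc_lt_top).ne ((hφ.meas u).aestronglyMeasurable)
    filter_upwards [MeasureTheory.ae_restrict_mem measurableSet_Ioc] with x hx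
    have hx0 : (0:ℝ) ≤ x := ha.trans hx.1.le
    have hxu : x ≤ u := hx.2.trans hb
    rw [Real.norm_eq_abs, abs_of_nonneg (hφ.nonneg x u hx0 hxu)]
    have := hφ.antitone x x u hx0 le_rfl hxu
    rwa [hφ.one_at x hx0] at this
  have hsplit : (∫ x in Set.Ioc 0 s, φ s x ∂ν.measure)
      = (∫ x in Set.Ioc 0 t, φ s x ∂ν.measure)
        + ∫ x in Set.Ioc t s, φ s x ∂ν.measure := by
    rw [← MeasureTheory.setIntegral_union (Set.Ioc_disjoint_Ioc_of_le le_rfl) measurableSet_Ioc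
      (hint s 0 t le_rfl hts) (hint s t s ht le_rfl), Set.Ioc_union_Ioc_eq_Ioc ht hts]
  have h1 : (∫ x in Set.Ioc 0 t, φ s x ∂ν.measure)
      ≤ ∫ x in Set.Ioc 0 t, φ t x ∂ν.measure := by
    apply MeasureTheory.setIntegral_mono_on (hint s 0 t le_rfl hts)
      (hint t 0 t le_rfl le_rfl) measurableSet_Ioc
    intro x hx
    exact hφ.antitone x t s hx.1.le hx.2 hts
  have h2 : (∫ x in Set.Ioc t s, φ s x ∂ν.measure)
      ≤ ∫ x in Set.Ioc t s, (1:ℝ) ∂ν.measure := by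
    apply MeasureTheory.setIntegral_mono_on (hint s t s ht le_rfl)
      (MeasureTheory.integrableOn_const measure_Ioc_lt_top.ne) measurableSet_Ioc
    intro x hx
    have hx0 : (0:ℝ) ≤ x := ht.trans hx.1.le
    have := hφ.antitone x x s hx0 le_rfl hx.2
    rwa [hφ.one_at x hx0] at this
  have h3 : (∫ x in Set.Ioc t s, (1:ℝ) ∂ν.measure) = ν s - ν t := by
    rw [MeasureTheory.setIntegral_const, MeasureTheory.measureReal_def, ν.measure_Ioc, smul_eq_mul, mul_one,
      ENNReal.toReal_ofReal (by linarith [ν.mono hts])]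
  linarith

/-- increases in the conditional intensity
`λ(u) = μ(u) + ∑_j w_j ∫_{(0,u]} φ_j(u,x) dN_j(x)` over `[t,s]` are accounted for,
up to `μ_max`, by the weighted number of new events:
`λ(s) - λ(t) ≤ μ_max + ∑_j w_j (N_j(s) - N_j(t))`. -/
theorem stmt_13 (L μ_max t s : ℝ) (hL : 1 ≤ L) (hμ_max : 0 ≤ μ_max)
    (ht : 0 ≤ t) (hts : t ≤ s)
    (n : ℕ) (hn : 1 ≤ n)
    (w : Fin n → ℝ) (hw : ∀ j, 0 ≤ w j)
    (N : Fin n → StieltjesFunction ℝ) (hN0 : ∀ j, N j 0 = 0)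
    (φ : Fin n → ℝ → ℝ → ℝ) (hφ : ∀ j, IsDelayKernel L (φ j))
    (μ : ℝ → ℝ) (hμ_nonneg : ∀ u : ℝ, 0 ≤ u → 0 ≤ μ u)
    (hμ_ub : ∀ u : ℝ, 0 ≤ u → μ u ≤ μ_max)
    (lam : ℝ → ℝ)
    (hlam : ∀ u : ℝ,
      lam u = μ u + ∑ j, w j * ∫ x in Set.Ioc 0 u, φ j u x ∂(N j).measure) :
    lam s - lam t ≤ μ_max + ∑ j, w j * (N j s - N j t) := by
  rw [hlam s, hlam t]
  have hs : (0:ℝ) ≤ s := ht.trans hts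
  have hterm : ∀ j, w j * (∫ x in Set.Ioc 0 s, φ j s x ∂(N j).measure)
      - w j * (∫ x in Set.Ioc 0 t, φ j t x ∂(N j).measure)
      ≤ w j * (N j s - N j t) := by
    intro j
    rw [← mul_sub]
    exact mul_le_mul_of_nonneg_left (kernel_int_aux L t s ht hts (N j) (φ j) (hφ j)) (hw j)
  have hsum : (∑ j, w j * ∫ x in Set.Ioc 0 s, φ j s x ∂(N j).measure)
      - ∑ j, w j * ∫ x in Set.Ioc 0 t, φ j t x ∂(N j).measure
      ≤ ∑ j, w j * (N j s - N j t) := by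
    rw [← Finset.sum_sub_distrib]
    exact Finset.sum_le_sum fun j _ => hterm j
  have hμ : μ s - μ t ≤ μ_max := by
    have := hμ_ub s hs
    have := hμ_nonneg t ht
    linarith
  linarith
end

section
/- Let L ≥ 1, Φ > 0, Λ ≥ 1, w > 0, and let φ be a delay kernel with smoothness constant L. Let N : [0,∞) → ℝ be a nondecreasing right-continuous function with N(0) = 0, and let λ : [0,∞) → ℝ be a measurable function with 0 ≤ λ(x) ≤ Λ for all x. For u ≥ 0 define M(u) := ∫_{(0,u]} φ(u,x) dN(x) − ∫₀ᵘ φ(u,x)·λ(x) dx. Suppose t ≥ 0 and s ∈ [t, t + 1/(2Λ)] satisfy: ∫₀ᵗ φ(t,x) dx ≤ Φ and w·∫_{(0,t]} φ(t,x) dN(x) ≤ Λ. Then |M(s) − M(t)| ≤ (N(s) − N(t)) + L/(2w) + 1/2 + L·Φ/2. -/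
open MeasureTheory Set

/-- Integrability of a measurable bounded function on a finite-measure set. -/
private lemma integrableOn_of_bound_aux {μ : Measure ℝ} {s : Set ℝ} (hs : MeasurableSet s)
    (hμ : μ s ≠ ⊤) {f : ℝ → ℝ} (hf : Measurable f) {C : ℝ}
    (h : ∀ x ∈ s, |f x| ≤ C) : IntegrableOn f s μ := by
  have hg : IntegrableOn (fun _ => C) s μ := integrableOn_const hμ
  refine hg.mono' hf.aestronglyMeasurable.restrict ?_
  filter_upwards [ae_restrict_mem hs] with x hx
  simpa using h x hx

/-- Mean value inequality for a delay kernel. -/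
private lemma kernel_incr_bound {L : ℝ} {φ : ℝ → ℝ → ℝ} (hφ : IsDelayKernel L φ)
    (hL : 0 ≤ L) {x t s : ℝ} (hx : 0 ≤ x) (hxt : x ≤ t) (hts : t ≤ s) :
    |φ s x - φ t x| ≤ L * φ t x * (s - t) := by
  have key : ∀ u ∈ Set.Icc t s, HasDerivWithinAt (fun v => φ v x)
      (derivWithin (fun v => φ v x) (Set.Ici x) u) (Set.Icc t s) u := fun u hu =>
    ((hφ.diff x u hx (hxt.trans hu.1)).hasDerivWithinAt).mono
      (fun y hy => hxt.trans hy.1)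
  have bound : ∀ u ∈ Set.Icc t s,
      ‖derivWithin (fun v => φ v x) (Set.Ici x) u‖ ≤ L * φ t x := by
    intro u hu
    calc ‖derivWithin (fun v => φ v x) (Set.Ici x) u‖ ≤ L * φ u x := by
          simpa [Real.norm_eq_abs] using hφ.deriv_bound x u hx (hxt.trans hu.1)
      _ ≤ L * φ t x := mul_le_mul_of_nonneg_left (hφ.antitone x t u hx hxt hu.1) hL
  have := Convex.norm_image_sub_le_of_norm_hasDerivWithin_le key bound (convex_Icc t s)
    (Set.left_mem_Icc.2 hts) (Set.right_mem_Icc.2 hts)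
  simpa [Real.norm_eq_abs, abs_of_nonneg (sub_nonneg.2 hts)] using this

set_option maxHeartbeats 1000000 in
/-- short-time increment bound for the compensated martingale
`M(u) = ∫_{(0,u]} φ(u,x) dN(x) - ∫₀ᵘ φ(u,x) λ(x) dx`: if `t ≥ 0`,
`t ≤ s ≤ t + 1/(2Λ)`, `∫₀ᵗ φ(t,x) dx ≤ Φ` and `w ∫_{(0,t]} φ(t,x) dN(x) ≤ Λ`, then
`|M(s) - M(t)| ≤ (N(s) - N(t)) + L/(2w) + 1/2 + L Φ/2`. -/
theorem stmt_14 (L Φ Λ w : ℝ) (hL : 1 ≤ L) (hΦ : 0 < Φ) (hΛ : 1 ≤ Λ) (hw : 0 < w)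
    (φ : ℝ → ℝ → ℝ) (hφ : IsDelayKernel L φ)
    (N : StieltjesFunction ℝ) (hN0 : N 0 = 0)
    (lam : ℝ → ℝ) (hlam_meas : Measurable lam)
    (hlam_nonneg : ∀ x : ℝ, 0 ≤ x → 0 ≤ lam x)
    (hlam_ub : ∀ x : ℝ, 0 ≤ x → lam x ≤ Λ)
    (M : ℝ → ℝ)
    (hM : ∀ u : ℝ, M u = (∫ x in Set.Ioc 0 u, φ u x ∂N.measure)
        - ∫ x in (0:ℝ)..u, φ u x * lam x)
    (t s : ℝ) (ht : 0 ≤ t) (hts : t ≤ s) (hs : s ≤ t + 1 / (2 * Λ))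
    (hΦ_int : (∫ x in (0:ℝ)..t, φ t x) ≤ Φ)
    (hexc : w * ∫ x in Set.Ioc 0 t, φ t x ∂N.measure ≤ Λ) :
    |M s - M t| ≤ (N s - N t) + L / (2 * w) + 1 / 2 + L * Φ / 2 := by
  have hL0 : (0:ℝ) ≤ L := by linarith
  have hΛ0 : (0:ℝ) < Λ := by linarith
  have hst0 : 0 ≤ s - t := sub_nonneg.2 hts
  have hstΛ : s - t ≤ 1 / (2 * Λ) := by linarith
  have hNts : N t ≤ N s := N.mono hts
  -- pointwise bounds on the kernel
  have hφ01 : ∀ u x : ℝ, 0 ≤ x → x ≤ u → |φ u x| ≤ 1 := by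
    intro u x hx hxu
    rw [abs_of_nonneg (hφ.nonneg x u hx hxu)]
    have := hφ.antitone x x u hx le_rfl hxu
    rwa [hφ.one_at x hx] at this
  -- finiteness of measures
  have hNfin : ∀ a b : ℝ, N.measure (Set.Ioc a b) ≠ ⊤ := by
    intro a b; rw [N.measure_Ioc]; exact ENNReal.ofReal_ne_top
  have hVfin : ∀ a b : ℝ, (volume : Measure ℝ) (Set.Ioc a b) ≠ ⊤ := by
    intro a b; rw [Real.volume_Ioc]; exact ENNReal.ofReal_ne_top
  -- integrabilities w.r.t. N.measure
  have IN_ss : IntegrableOn (fun x => φ s x) (Set.Ioc 0 s) N.measure :=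
    integrableOn_of_bound_aux measurableSet_Ioc (hNfin 0 s) (hφ.meas s)
      (fun x hx => hφ01 s x hx.1.le hx.2)
  have IN_s0t : IntegrableOn (fun x => φ s x) (Set.Ioc 0 t) N.measure :=
    IN_ss.mono_set (Set.Ioc_subset_Ioc_right hts)
  have IN_sts : IntegrableOn (fun x => φ s x) (Set.Ioc t s) N.measure :=
    IN_ss.mono_set (Set.Ioc_subset_Ioc_left ht)
  have IN_t0t : IntegrableOn (fun x => φ t x) (Set.Ioc 0 t) N.measure :=
    integrableOn_of_bound_aux measurableSet_Ioc (hNfin 0 t) (hφ.meas t)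
      (fun x hx => hφ01 t x hx.1.le hx.2)
  -- integrabilities w.r.t. volume
  have hlamB : ∀ x : ℝ, 0 ≤ x → |lam x| ≤ Λ := fun x hx => by
    rw [abs_of_nonneg (hlam_nonneg x hx)]; exact hlam_ub x hx
  have IL_ss : IntegrableOn (fun x => φ s x * lam x) (Set.Ioc 0 s) volume := by
    refine integrableOn_of_bound_aux measurableSet_Ioc (hVfin 0 s)
      ((hφ.meas s).mul hlam_meas) (C := Λ) ?_
    intro x hx
    rw [abs_mul]
    calc |φ s x| * |lam x| ≤ 1 * Λ :=
          mul_le_mul (hφ01 s x hx.1.le hx.2) (hlamB x hx.1.le) (abs_nonneg _) zero_le_one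
      _ = Λ := one_mul Λ
  have IL_s0t : IntegrableOn (fun x => φ s x * lam x) (Set.Ioc 0 t) volume :=
    IL_ss.mono_set (Set.Ioc_subset_Ioc_right hts)
  have IL_sts : IntegrableOn (fun x => φ s x * lam x) (Set.Ioc t s) volume :=
    IL_ss.mono_set (Set.Ioc_subset_Ioc_left ht)
  have IL_t0t : IntegrableOn (fun x => φ t x * lam x) (Set.Ioc 0 t) volume := by
    refine integrableOn_of_bound_aux measurableSet_Ioc (hVfin 0 t)
      ((hφ.meas t).mul hlam_meas) (C := Λ) ?_
    intro x hx
    rw [abs_mul]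
    calc |φ t x| * |lam x| ≤ 1 * Λ :=
          mul_le_mul (hφ01 t x hx.1.le hx.2) (hlamB x hx.1.le) (abs_nonneg _) zero_le_one
      _ = Λ := one_mul Λ
  have ILφ_t0t : IntegrableOn (fun x => φ t x) (Set.Ioc 0 t) volume :=
    integrableOn_of_bound_aux measurableSet_Ioc (hVfin 0 t) (hφ.meas t)
      (fun x hx => hφ01 t x hx.1.le hx.2)
  -- splitting
  have splitN : (∫ x in Set.Ioc 0 s, φ s x ∂N.measure)
      = (∫ x in Set.Ioc 0 t, φ s x ∂N.measure) + ∫ x in Set.Ioc t s, φ s x ∂N.measure := by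
    rw [← setIntegral_union (Set.Ioc_disjoint_Ioc_of_le le_rfl) measurableSet_Ioc IN_s0t IN_sts,
      Set.Ioc_union_Ioc_eq_Ioc ht hts]
  have splitL : (∫ x in Set.Ioc 0 s, φ s x * lam x)
      = (∫ x in Set.Ioc 0 t, φ s x * lam x) + ∫ x in Set.Ioc t s, φ s x * lam x := by
    rw [← setIntegral_union (Set.Ioc_disjoint_Ioc_of_le le_rfl) measurableSet_Ioc IL_s0t IL_sts,
      Set.Ioc_union_Ioc_eq_Ioc ht hts]
  -- notation
  set A := ∫ x in Set.Ioc t s, φ s x ∂N.measure with hA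
  set B := ∫ x in Set.Ioc 0 t, (φ s x - φ t x) ∂N.measure with hB
  set C := ∫ x in Set.Ioc t s, φ s x * lam x with hC
  set D := ∫ x in Set.Ioc 0 t, (φ s x - φ t x) * lam x with hD
  have hBsub : B = (∫ x in Set.Ioc 0 t, φ s x ∂N.measure)
      - ∫ x in Set.Ioc 0 t, φ t x ∂N.measure := integral_sub IN_s0t IN_t0t
  have hDsub : D = (∫ x in Set.Ioc 0 t, φ s x * lam x)
      - ∫ x in Set.Ioc 0 t, φ t x * lam x := by
    rw [hD, ← integral_sub IL_s0t IL_t0t]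
    exact integral_congr_ae (Filter.Eventually.of_forall (fun x => by
      show (φ s x - φ t x) * lam x = φ s x * lam x - φ t x * lam x; ring))
  have hMst : M s - M t = A + B - (C + D) := by
    rw [hM s, hM t, intervalIntegral.integral_of_le (ht.trans hts),
      intervalIntegral.integral_of_le ht, splitN, splitL, hBsub, hDsub]
    ring
  -- bounds on A
  have hA0 : 0 ≤ A :=
    setIntegral_nonneg measurableSet_Ioc
      (fun x hx => hφ.nonneg x s (ht.trans hx.1.le) hx.2)
  have hA1 : A ≤ N s - N t := by
    calc A ≤ ∫ _x in Set.Ioc t s, (1:ℝ) ∂N.measure := by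
          refine setIntegral_mono_on IN_sts
            (integrableOn_const (hNfin t s)) measurableSet_Ioc ?_
          intro x hx
          have := hφ01 s x (ht.trans hx.1.le) hx.2
          exact (le_abs_self _).trans this
      _ = N s - N t := by
          rw [setIntegral_const, measureReal_def, N.measure_Ioc, smul_eq_mul, mul_one,
            ENNReal.toReal_ofReal (sub_nonneg.2 hNts)]
  -- bounds on C
  have hC0 : 0 ≤ C :=
    setIntegral_nonneg measurableSet_Ioc (fun x hx =>
      mul_nonneg (hφ.nonneg x s (ht.trans hx.1.le) hx.2) (hlam_nonneg x (ht.trans hx.1.le)))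
  have hC1 : C ≤ 1 / 2 := by
    have h1 : C ≤ ∫ _x in Set.Ioc t s, Λ := by
      refine setIntegral_mono_on IL_sts
        (integrableOn_const (hVfin t s)) measurableSet_Ioc ?_
      intro x hx
      calc φ s x * lam x ≤ 1 * Λ :=
            mul_le_mul (by
              have := hφ01 s x (ht.trans hx.1.le) hx.2
              exact (le_abs_self _).trans this)
              (hlam_ub x (ht.trans hx.1.le)) (hlam_nonneg x (ht.trans hx.1.le)) zero_le_one
        _ = Λ := one_mul Λ
    have h2 : (∫ _x in Set.Ioc t s, Λ) = (s - t) * Λ := by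
      rw [setIntegral_const, measureReal_def, Real.volume_Ioc, smul_eq_mul,
        ENNReal.toReal_ofReal hst0]
    have h3 : (s - t) * Λ ≤ (1 / (2 * Λ)) * Λ := mul_le_mul_of_nonneg_right hstΛ hΛ0.le
    have h4 : (1 / (2 * Λ)) * Λ = 1 / 2 := by field_simp
    linarith
  -- pointwise increment bound
  have hinc : ∀ x ∈ Set.Ioc (0:ℝ) t, |φ s x - φ t x| ≤ L * (s - t) * φ t x := by
    intro x hx
    have := kernel_incr_bound hφ hL0 hx.1.le hx.2 hts
    calc |φ s x - φ t x| ≤ L * φ t x * (s - t) := this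
      _ = L * (s - t) * φ t x := by ring
  -- bound on B
  have hIφN0 : 0 ≤ ∫ x in Set.Ioc 0 t, φ t x ∂N.measure :=
    setIntegral_nonneg measurableSet_Ioc (fun x hx => hφ.nonneg x t hx.1.le hx.2)
  have hIφN1 : (∫ x in Set.Ioc 0 t, φ t x ∂N.measure) ≤ Λ / w := by
    rw [le_div_iff₀ hw]; linarith
  have hBabs : |B| ≤ L / (2 * w) := by
    have h1 : |B| ≤ ∫ x in Set.Ioc 0 t, |φ s x - φ t x| ∂N.measure := by
      simpa [Real.norm_eq_abs] using
        norm_integral_le_integral_norm (μ := N.measure.restrict (Set.Ioc 0 t))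
          (f := fun x => φ s x - φ t x)
    have h2 : (∫ x in Set.Ioc 0 t, |φ s x - φ t x| ∂N.measure)
        ≤ ∫ x in Set.Ioc 0 t, L * (s - t) * φ t x ∂N.measure := by
      refine setIntegral_mono_on (IN_s0t.sub IN_t0t).abs
        (IN_t0t.const_mul (L * (s - t))) measurableSet_Ioc hinc
    have h3 : (∫ x in Set.Ioc 0 t, L * (s - t) * φ t x ∂N.measure)
        = L * (s - t) * ∫ x in Set.Ioc 0 t, φ t x ∂N.measure := integral_const_mul _ _
    have h4 : L * (s - t) * (∫ x in Set.Ioc 0 t, φ t x ∂N.measure)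
        ≤ L * (s - t) * (Λ / w) :=
      mul_le_mul_of_nonneg_left hIφN1 (by positivity)
    have h5 : L * (s - t) * (Λ / w) ≤ L * (1 / (2 * Λ)) * (Λ / w) :=
      mul_le_mul_of_nonneg_right
        (mul_le_mul_of_nonneg_left hstΛ hL0) (by positivity)
    have h6 : L * (1 / (2 * Λ)) * (Λ / w) = L / (2 * w) := by field_simp
    linarith
  -- bound on D
  have hIφV0 : 0 ≤ ∫ x in Set.Ioc 0 t, φ t x :=
    setIntegral_nonneg measurableSet_Ioc (fun x hx => hφ.nonneg x t hx.1.le hx.2)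
  have hIφV1 : (∫ x in Set.Ioc 0 t, φ t x) ≤ Φ := by
    rwa [intervalIntegral.integral_of_le ht] at hΦ_int
  have hDabs : |D| ≤ L * Φ / 2 := by
    have h1 : |D| ≤ ∫ x in Set.Ioc 0 t, |φ s x - φ t x| * |lam x| := by
      simpa [Real.norm_eq_abs, abs_mul] using
        norm_integral_le_integral_norm (μ := (volume : Measure ℝ).restrict (Set.Ioc 0 t))
          (f := fun x => (φ s x - φ t x) * lam x)
    have h2 : (∫ x in Set.Ioc 0 t, |φ s x - φ t x| * |lam x|)
        ≤ ∫ x in Set.Ioc 0 t, L * (s - t) * Λ * φ t x := by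
      refine setIntegral_mono_on ?_ (ILφ_t0t.const_mul (L * (s - t) * Λ))
        measurableSet_Ioc ?_
      · refine integrableOn_of_bound_aux measurableSet_Ioc (hVfin 0 t)
          ((((hφ.meas s).sub (hφ.meas t)).abs).mul hlam_meas.abs) (C := 2 * Λ) ?_
        intro x hx
        have b1 : |φ s x - φ t x| ≤ 2 := by
          have := hφ01 s x hx.1.le (hx.2.trans hts)
          have := hφ01 t x hx.1.le hx.2
          have := abs_sub (φ s x) (φ t x)
          calc |φ s x - φ t x| ≤ |φ s x| + |φ t x| := abs_sub _ _
            _ ≤ 2 := by linarith [hφ01 s x hx.1.le (hx.2.trans hts), hφ01 t x hx.1.le hx.2]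
        rw [abs_of_nonneg (mul_nonneg (abs_nonneg _) (abs_nonneg _))]
        exact mul_le_mul b1 (hlamB x hx.1.le) (abs_nonneg _) (by norm_num)
      · intro x hx
        calc |φ s x - φ t x| * |lam x| ≤ (L * (s - t) * φ t x) * Λ :=
              mul_le_mul (hinc x hx) (hlamB x hx.1.le) (abs_nonneg _)
                (by have := hφ.nonneg x t hx.1.le hx.2; positivity)
          _ = L * (s - t) * Λ * φ t x := by ring
    have h3 : (∫ x in Set.Ioc 0 t, L * (s - t) * Λ * φ t x)
        = L * (s - t) * Λ * ∫ x in Set.Ioc 0 t, φ t x := integral_const_mul _ _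
    have h4 : L * (s - t) * Λ * (∫ x in Set.Ioc 0 t, φ t x)
        ≤ L * (s - t) * Λ * Φ :=
      mul_le_mul_of_nonneg_left hIφV1 (by positivity)
    have h5 : (s - t) * Λ ≤ 1 / 2 := by
      have := mul_le_mul_of_nonneg_right hstΛ hΛ0.le
      have he : (1 / (2 * Λ)) * Λ = 1 / 2 := by field_simp
      linarith
    have h6 : L * (s - t) * Λ * Φ ≤ L * Φ / 2 := by
      nlinarith [mul_le_mul_of_nonneg_left h5 (mul_nonneg hL0 hΦ.le)]
    linarith
  -- conclusion
  have hB' := abs_le.1 hBabs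
  have hD' := abs_le.1 hDabs
  rw [hMst, abs_le]
  have hNN : (0:ℝ) ≤ N s - N t := sub_nonneg.2 hNts
  constructor <;> linarith [hB'.1, hB'.2, hD'.1, hD'.2]
end
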